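/- Let κ = 3, let (X_t)_{t≥0} be a 3-color FCA trajectory on ℤ, and suppose no edge flips at any time t ≥ t_0, where t_0 ≥ 0. Then for every integer t ≥ 1: M_{t_0}(t − 1) ≤ ne_{3t + t_0}(0) ≤ M_{t_0}(t). -/

import Mathlib

/-!
As long as no edge flips, the 1-form changes by `E_t(x) - E_t(x+1)`, where `E_t` is the
excitation indicator, so `rk_{t+1}(x) = rk_t(x) + E_t(x)`. A finite check on a window of
seven sites shows that during three consecutive steps a site is excited exactly once if one of its
neighbours has rank one higher, and never otherwise; that is,
`rk_{t+3}(x) = max (rk_t(x-1), rk_t(x), rk_t(x+1))`. Iterating from `t₀` gives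
`ne_{3n+t₀}(0) = rk_{t₀+3n}(0) = M_{t₀}(n)`, and both inequalities follow because `ne_t(0)` is
monotone in `t`.
-/

noncomputable section

namespace FCA

/-- The blinking color `b(κ) = ⌊(κ-1)/2⌋`. -/
def blink (κ : ℕ) : ℕ := (κ - 1) / 2

/-- One step of the κ-color firefly cellular automaton on ℤ. -/
def step (κ : ℕ) (X : ℤ → ZMod κ) : ℤ → ZMod κ := fun x =>
  if (X x).val > blink κ ∧ ((X (x - 1)).val = blink κ ∨ (X (x + 1)).val = blink κ)
  then X x else X x + 1

/-- The FCA trajectory started from `X0`. -/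
def traj (κ : ℕ) (X0 : ℤ → ZMod κ) : ℕ → ℤ → ZMod κ
  | 0 => X0
  | t + 1 => step κ (traj κ X0 t)

/-- Site `x` is excited at time `t`: `X_{t+1}(x) = X_t(x)`. -/
def excited (κ : ℕ) (X0 : ℤ → ZMod κ) (t : ℕ) (x : ℤ) : Prop :=
  traj κ X0 (t + 1) x = traj κ X0 t x

/-- The number of excitations of site `x` before time `t`. -/
def ne' (κ : ℕ) (X0 : ℤ → ZMod κ) (t : ℕ) (x : ℤ) : ℕ :=
  ((Finset.range t).filter fun s => traj κ X0 (s + 1) x = traj κ X0 s x).card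

/-- The associated 1-form on the oriented edge `(x, x+1)`. -/
def dform (κ : ℕ) (X : ℤ → ZMod κ) (x : ℤ) : ℤ :=
  let d : ℕ := (X (x + 1) - X x).val
  if 2 * d < κ then (d : ℤ)
  else if κ < 2 * d then (d : ℤ) - (κ : ℤ)
  else if (X x).val ≤ blink κ then ((κ / 2 : ℕ) : ℤ) else -((κ / 2 : ℕ) : ℤ)

/-- The edge `(x, x+1)` flips at time `t`. -/
def flips (κ : ℕ) (X0 : ℤ → ZMod κ) (t : ℕ) (x : ℤ) : Prop :=
  (0 < dform κ (traj κ X0 t) x ∧ dform κ (traj κ X0 (t + 1)) x < 0) ∨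
  (dform κ (traj κ X0 t) x < 0 ∧ 0 < dform κ (traj κ X0 (t + 1)) x)

/-- Path integral of an edge function: `∫_x^y f = Σ_{i=x}^{y-1} f(i)` for `x ≤ y`,
and `∫_y^x f = -∫_x^y f`. -/
def pathInt (f : ℤ → ℤ) (x y : ℤ) : ℤ :=
  if x ≤ y then ∑ i ∈ Finset.Ico x y, f i else -∑ i ∈ Finset.Ico y x, f i

/-- The tournament expansion: `rk_t(0) = ne_t(0)` and `rk_t(x) = rk_t(0) - ∫_0^x dX_t`. -/
def rk (κ : ℕ) (X0 : ℤ → ZMod κ) (t : ℕ) (x : ℤ) : ℤ :=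
  (ne' κ X0 t 0 : ℤ) - pathInt (dform κ (traj κ X0 t)) 0 x

/-- `M_t(r)`: the maximum rank at time `t` among sites `x` with `|x| ≤ r`. -/
def maxRk (κ : ℕ) (X0 : ℤ → ZMod κ) (t : ℕ) (r : ℝ) : ℤ :=
  sSup (rk κ X0 t '' {x : ℤ | |(x : ℝ)| ≤ r})

end FCA

open FCA

theorem isGreatest_image_Icc_of_succ_eq_max {α : Type*} [LinearOrder α] (f : ℕ → ℤ → α)
    (hf : ∀ n x, f (n + 1) x = max (f n (x - 1)) (max (f n x) (f n (x + 1)))) (n : ℕ) (x : ℤ) :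
    IsGreatest (f 0 '' Set.Icc (x - n) (x + n)) (f n x) := by
  induction n generalizing x with
  | zero => simp
  | succ n ih =>
    constructor
    · obtain ⟨y, hy, hxy⟩ : ∃ y, |y - x| ≤ 1 ∧ f (n + 1) x = f n y := by
        rcases max_choice (f n (x - 1)) (max (f n x) (f n (x + 1))) with h | h
        · exact ⟨x - 1, by norm_num, by rw [hf, h]⟩
        rcases max_choice (f n x) (f n (x + 1)) with h' | h'
        · exact ⟨x, by norm_num, by rw [hf, h, h']⟩
        · exact ⟨x + 1, by norm_num, by rw [hf, h, h']⟩
      obtain ⟨z, hz, hzy⟩ := (ih y).1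
      rw [abs_le] at hy
      rw [Set.mem_Icc] at hz
      exact ⟨z, by rw [Set.mem_Icc]; push_cast; omega, hzy.trans hxy.symm⟩
    · rintro _ ⟨z, hz, rfl⟩
      rw [Set.mem_Icc] at hz
      push_cast at hz
      set y := max (x - 1) (min z (x + 1))
      calc f 0 z ≤ f n y := (ih y).2 ⟨z, by rw [Set.mem_Icc]; omega, rfl⟩
        _ ≤ f (n + 1) x := by
          rw [hf]
          rcases (by omega : y = x - 1 ∨ y = x ∨ y = x + 1) with hy | hy | hy <;> rw [hy] <;> simp

namespace FCA

open Finset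

theorem pathInt_self (f : ℤ → ℤ) (x : ℤ) : pathInt f x x = 0 := by
  simp [pathInt]

theorem pathInt_add_one_right (f : ℤ → ℤ) (y x : ℤ) :
    pathInt f y (x + 1) = pathInt f y x + f x := by
  unfold pathInt
  split_ifs with h₁ h₂ h₂
  · rw [← insert_Ico_right_eq_Ico_add_one h₂, sum_insert right_notMem_Ico, add_comm]
  · obtain rfl : y = x + 1 := by omega
    simp [← insert_Ico_add_one_left_eq_Ico (lt_add_one x)]
  · omega
  · rw [← insert_Ico_add_one_left_eq_Ico (by omega : x < y), sum_insert (by simp)]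
    ring

theorem ne'_succ (κ : ℕ) (X0 : ℤ → ZMod κ) (t : ℕ) (x : ℤ) :
    ne' κ X0 (t + 1) x = ne' κ X0 t x + if traj κ X0 (t + 1) x = traj κ X0 t x then 1 else 0 := by
  simp only [ne', range_add_one, filter_insert]
  split_ifs <;> simp [card_insert_of_notMem]

theorem ne'_mono (κ : ℕ) (X0 : ℤ → ZMod κ) (x : ℤ) : Monotone fun t => ne' κ X0 t x :=
  fun _ _ h => card_le_card (filter_subset_filter _ (range_subset_range.mpr h))

theorem rk_zero (κ : ℕ) (X0 : ℤ → ZMod κ) (t : ℕ) : rk κ X0 t 0 = ne' κ X0 t 0 := by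
  simp [rk, pathInt_self]

theorem rk_add_one (κ : ℕ) (X0 : ℤ → ZMod κ) (t : ℕ) (x : ℤ) :
    rk κ X0 t (x + 1) = rk κ X0 t x - dform κ (traj κ X0 t) x := by
  rw [rk, rk, pathInt_add_one_right]
  ring

theorem rk_sub_one (κ : ℕ) (X0 : ℤ → ZMod κ) (t : ℕ) (x : ℤ) :
    rk κ X0 t (x - 1) = rk κ X0 t x + dform κ (traj κ X0 t) (x - 1) := by
  have h := rk_add_one κ X0 t (x - 1)
  rw [sub_add_cancel] at h
  linarith

theorem maxRk_natCast (κ : ℕ) (X0 : ℤ → ZMod κ) (t n : ℕ) :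
    maxRk κ X0 t n = sSup (rk κ X0 t '' Set.Icc (-(n : ℤ)) n) := by
  have hset : {x : ℤ | |(x : ℝ)| ≤ n} = Set.Icc (-(n : ℤ)) n := by
    ext x
    rw [Set.mem_ofPred_eq, Set.mem_Icc, ← abs_le, ← Int.cast_abs]
    exact_mod_cast Iff.rfl
  rw [maxRk, hset]

def excites3 (l a r : ZMod 3) : Bool := 1 < a.val && (l.val == 1 || r.val == 1)

def next3 (l a r : ZMod 3) : ZMod 3 := if excites3 l a r then a else a + 1

theorem valMinAbs_next3_sub_next3 (w a b w' : ZMod 3)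
    (h : 0 ≤ (b - a).valMinAbs * (next3 a b w' - next3 w a b).valMinAbs) :
    (next3 a b w' - next3 w a b).valMinAbs =
      (b - a).valMinAbs + (excites3 w a b).toNat - (excites3 a b w').toNat := by
  revert w a b w'
  decide

/- `l a r` are the colours of `x - 1, x, x + 1` at time `t` and `u, v` those of `x ∓ 2`; `u', v'`
stand for the colours of `x ∓ 2` at time `t + 1`, which depend on sites outside the window and are
left free. -/
theorem sum_excites3_three_steps (u l a r v u' v' : ZMod 3) :
    let l₁ := next3 u l a
    let a₁ := next3 l a r
    let r₁ := next3 a r v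
    0 ≤ (a - l).valMinAbs * (a₁ - l₁).valMinAbs → 0 ≤ (r - a).valMinAbs * (r₁ - a₁).valMinAbs →
    ((excites3 l a r).toNat + (excites3 l₁ a₁ r₁).toNat +
      (excites3 (next3 u' l₁ a₁) (next3 l₁ a₁ r₁) (next3 a₁ r₁ v')).toNat : ℤ) =
      max (max (a - l).valMinAbs (-(r - a).valMinAbs)) 0 := by
  revert u l a r v u' v'
  decide

def excitesAt (X : ℤ → ZMod 3) (x : ℤ) : Bool := excites3 (X (x - 1)) (X x) (X (x + 1))

theorem step_three (X : ℤ → ZMod 3) (x : ℤ) : step 3 X x = next3 (X (x - 1)) (X x) (X (x + 1)) := by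
  unfold step next3
  generalize X (x - 1) = l, X x = a, X (x + 1) = r
  revert l a r
  decide

theorem dform_three_eq_valMinAbs (X : ℤ → ZMod 3) (x : ℤ) : dform 3 X x = (X (x + 1) - X x).valMinAbs := by
  unfold dform
  generalize X x = a, X (x + 1) = b
  revert a b
  decide

theorem next3_eq_self_iff (l a r : ZMod 3) : next3 l a r = a ↔ excites3 l a r := by
  revert l a r
  decide

section Trajectory

variable (X0 : ℤ → ZMod 3)

theorem traj_three_succ (t : ℕ) (x : ℤ) :
    traj 3 X0 (t + 1) x = next3 (traj 3 X0 t (x - 1)) (traj 3 X0 t x) (traj 3 X0 t (x + 1)) :=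
  step_three _ x

theorem flips_three_iff (t : ℕ) (x : ℤ) :
    flips 3 X0 t x ↔ dform 3 (traj 3 X0 t) x * dform 3 (traj 3 X0 (t + 1)) x < 0 :=
  Int.mul_neg_iff.symm

theorem ne'_three_succ (t : ℕ) (x : ℤ) :
    (ne' 3 X0 (t + 1) x : ℤ) = ne' 3 X0 t x + (excitesAt (traj 3 X0 t) x).toNat := by
  simp only [ne'_succ, traj_three_succ, next3_eq_self_iff, excitesAt]
  cases excites3 (traj 3 X0 t (x - 1)) (traj 3 X0 t x) (traj 3 X0 t (x + 1)) <;> simp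

theorem dform_three_succ {t : ℕ} {x : ℤ} (h : ¬ flips 3 X0 t x) :
    dform 3 (traj 3 X0 (t + 1)) x = dform 3 (traj 3 X0 t) x +
      (excitesAt (traj 3 X0 t) x).toNat - (excitesAt (traj 3 X0 t) (x + 1)).toNat := by
  rw [flips_three_iff, not_lt] at h
  simp only [dform_three_eq_valMinAbs, traj_three_succ, excitesAt, add_sub_cancel_right] at h ⊢
  exact valMinAbs_next3_sub_next3 _ _ _ _ h

theorem rk_three_succ {t : ℕ} (h : ∀ x, ¬ flips 3 X0 t x) (x : ℤ) :
    rk 3 X0 (t + 1) x = rk 3 X0 t x + (excitesAt (traj 3 X0 t) x).toNat := by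
  induction x using Int.induction_on with
  | zero => rw [rk_zero, rk_zero, ne'_three_succ]
  | succ x ih => rw [rk_add_one, rk_add_one, ih, dform_three_succ X0 (h x)]; ring
  | pred x ih =>
    have hd := dform_three_succ X0 (h (-x - 1))
    rw [sub_add_cancel] at hd
    rw [rk_sub_one, rk_sub_one, ih, hd]
    ring

theorem rk_three_add_three {t : ℕ} (h : ∀ s < 3, ∀ x, ¬ flips 3 X0 (t + s) x) (x : ℤ) :
    rk 3 X0 (t + 3) x = max (rk 3 X0 t (x - 1)) (max (rk 3 X0 t x) (rk 3 X0 t (x + 1))) := by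
  have hl := h 0 (by norm_num) (x - 1)
  have hr := h 0 (by norm_num) x
  simp only [add_zero, flips_three_iff, not_lt, dform_three_eq_valMinAbs, traj_three_succ, sub_add_cancel,
    add_sub_cancel_right] at hl hr
  have hcount := sum_excites3_three_steps _ _ _ _ _
    (traj 3 X0 (t + 1) (x - 1 - 1)) (traj 3 X0 (t + 1) (x + 1 + 1)) hl hr
  rw [show t + 3 = t + 1 + 1 + 1 from rfl, rk_three_succ X0 (h 2 (by norm_num)),
    rk_three_succ X0 (h 1 (by norm_num)), rk_three_succ X0 (by simpa using h 0 (by norm_num)),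
    rk_sub_one, rk_add_one, dform_three_eq_valMinAbs, dform_three_eq_valMinAbs]
  simp only [excitesAt, traj_three_succ, sub_add_cancel, add_sub_cancel_right] at hcount ⊢
  omega

end Trajectory

theorem isGreatest_rk_three {X0 : ℤ → ZMod 3} {t₀ : ℕ}
    (h : ∀ t : ℕ, t₀ ≤ t → ∀ x : ℤ, ¬ flips 3 X0 t x) (n : ℕ) (x : ℤ) :
    IsGreatest (rk 3 X0 t₀ '' Set.Icc (x - n) (x + n)) (rk 3 X0 (t₀ + 3 * n) x) :=
  isGreatest_image_Icc_of_succ_eq_max (fun n => rk 3 X0 (t₀ + 3 * n))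
    (fun m x => rk_three_add_three X0 (t := t₀ + 3 * m) (fun _ _ => h _ (by omega)) x) n x

theorem maxRk_three_natCast {X0 : ℤ → ZMod 3} {t₀ : ℕ}
    (h : ∀ t : ℕ, t₀ ≤ t → ∀ x : ℤ, ¬ flips 3 X0 t x) (n : ℕ) :
    maxRk 3 X0 t₀ n = ne' 3 X0 (3 * n + t₀) 0 := by
  rw [maxRk_natCast, add_comm, ← rk_zero]
  simpa using (isGreatest_rk_three h n 0).csSup_eq

end FCA

/-- For the 3-color FCA on ℤ, if no edge flips at any time `t ≥ t₀`,
then for every integer `t ≥ 1`: `M_{t₀}(t-1) ≤ ne_{3t+t₀}(0) ≤ M_{t₀}(t)`. -/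
theorem fca3_rank_vs_excitations (X0 : ℤ → ZMod 3) (t₀ : ℕ)
    (hnoflip : ∀ t : ℕ, t₀ ≤ t → ∀ x : ℤ, ¬ flips 3 X0 t x) :
    ∀ t : ℕ, 1 ≤ t →
      maxRk 3 X0 t₀ ((t : ℝ) - 1) ≤ (ne' 3 X0 (3 * t + t₀) 0 : ℤ) ∧
        (ne' 3 X0 (3 * t + t₀) 0 : ℤ) ≤ maxRk 3 X0 t₀ (t : ℝ) := by
  intro t ht
  obtain ⟨s, rfl⟩ := Nat.exists_eq_add_of_le' ht
  rw [show ((s + 1 : ℕ) : ℝ) - 1 = s by push_cast; ring, maxRk_three_natCast hnoflip,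
    maxRk_three_natCast hnoflip]
  exact ⟨by exact_mod_cast ne'_mono 3 X0 0 (by omega), le_rfl⟩
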